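/- For all integers n \ge k \ge 0, the Bell polynomials of the second kind satisfy the convolution identity B_{n,k}(x_1+y_1, ..., x_{n-k+1}+y_{n-k+1}) = \sum_{r+s=k} \sum_{\ell+m=n} binom(n, \ell) B_{\ell,r}(x_1,...,x_{\ell-r+1}) B_{m,s}(y_1,...,y_{m-s+1}). -/

import Mathlib

open Nat

/-- The Bell polynomials of the second kind `B_{n,k}(x_1, x_2, …)`, where `x i` denotes `x_i`. -/
noncomputable def bellPoly (n k : ℕ) (x : ℕ → ℂ) : ℂ :=
  ∑ ℓ ∈ (Fintype.piFinset fun _ : Fin n => Finset.range (n + 1)).filter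
      (fun ℓ => (∑ i : Fin n, ((i : ℕ) + 1) * ℓ i) = n ∧ (∑ i : Fin n, ℓ i) = k),
    ((n ! : ℂ) / ∏ i : Fin n, ((ℓ i)! : ℂ)) *
      ∏ i : Fin n, (x ((i : ℕ) + 1) / (((i : ℕ) + 1)! : ℂ)) ^ ℓ i

/-!
With `E_x(t) = ∑_{i ≥ 1} x_i t^i / i!`, the multinomial theorem gives
`B_{n,k}(x) = n!/k! · [t^n] E_x(t)^k`. Since `E_{x+y} = E_x + E_y`, the binomial theorem and the
Cauchy product turn `[t^n] (E_x + E_y)^k` into the double sum, and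
`n!/k! · C(k,r) · r!/ℓ! · s!/m! = C(n,ℓ)`. We work with the polynomial truncation of `E_x` at
degree `N`; the discarded tail is divisible by `t^(N+1)`, so it does not affect `[t^ℓ] E_x^r`
for `ℓ ≤ N`.
-/

open Finset Polynomial

lemma apply_le_sum_succ_mul {N : ℕ} (a : Fin N → ℕ) (j : Fin N) :
    a j ≤ ∑ i : Fin N, ((i : ℕ) + 1) * a i :=
  (Nat.le_mul_of_pos_left _ j.succ_pos).trans
    (single_le_sum (f := fun i : Fin N => ((i : ℕ) + 1) * a i) (by simp) (mem_univ j))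

lemma cast_multinomial {ι K : Type*} [Field K] [CharZero K] (s : Finset ι) (a : ι → ℕ) :
    (multinomial s a : K) = (∑ i ∈ s, a i)! / ∏ i ∈ s, ((a i)! : K) := by
  rw [← multinomial_spec, Nat.cast_mul, Nat.cast_prod, mul_div_cancel_left₀]
  exact prod_ne_zero_iff.2 fun i _ => Nat.cast_ne_zero.2 (factorial_ne_zero _)

lemma coeff_sum_C_mul_X_pow_pow {ι R : Type*} [DecidableEq ι] [CommSemiring R]
    (s : Finset ι) (c : ι → R) (w : ι → ℕ) (r l : ℕ) :
    ((∑ i ∈ s, C (c i) * X ^ w i) ^ r).coeff l =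
      ∑ a ∈ (piAntidiag s r).filter (fun a => ∑ i ∈ s, w i * a i = l),
        (multinomial s a : R) * ∏ i ∈ s, c i ^ a i := by
  have hterm (a : ι → ℕ) :
      (multinomial s a : R[X]) * ∏ i ∈ s, (C (c i) * X ^ w i) ^ a i =
        C ((multinomial s a : R) * ∏ i ∈ s, c i ^ a i) * X ^ (∑ i ∈ s, w i * a i) := by
    simp only [mul_pow, prod_mul_distrib, ← pow_mul, prod_pow_eq_pow_sum, map_mul, map_prod,
      map_pow, map_natCast]
    ring
  rw [sum_pow_eq_sum_piAntidiag, finsetSum_coeff, sum_filter]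
  refine sum_congr rfl fun a _ => ?_
  rw [hterm, coeff_C_mul_X_pow]
  simp only [eq_comm]

noncomputable def egfTrunc (x : ℕ → ℂ) (N : ℕ) : ℂ[X] :=
  ∑ i : Fin N, C (x ((i : ℕ) + 1) / (((i : ℕ) + 1)! : ℂ)) * X ^ ((i : ℕ) + 1)

lemma egfTrunc_add (x y : ℕ → ℂ) (N : ℕ) :
    egfTrunc (fun i => x i + y i) N = egfTrunc x N + egfTrunc y N := by
  simp only [egfTrunc, ← sum_add_distrib, _root_.add_div, map_add, add_mul]

lemma X_pow_dvd_egfTrunc_sub {l N : ℕ} (h : l ≤ N) (x : ℕ → ℂ) :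
    X ^ (l + 1) ∣ egfTrunc x N - egfTrunc x l := by
  simp only [egfTrunc,
    Fin.sum_univ_eq_sum_range (fun i => C (x (i + 1) / ((i + 1)! : ℂ)) * X ^ (i + 1)),
    ← sum_range_add_sum_Ico _ h, add_sub_cancel_left]
  exact dvd_sum fun i hi => dvd_mul_of_dvd_right (pow_dvd_pow X (by simp at hi; omega)) _

lemma coeff_egfTrunc_pow_of_le {l N : ℕ} (h : l ≤ N) (x : ℕ → ℂ) (r : ℕ) :
    (egfTrunc x N ^ r).coeff l = (egfTrunc x l ^ r).coeff l := by
  have hdvd : X ^ (l + 1) ∣ egfTrunc x N ^ r - egfTrunc x l ^ r :=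
    (X_pow_dvd_egfTrunc_sub h x).trans (sub_dvd_pow_sub_pow _ _ r)
  rw [← sub_eq_zero, ← coeff_sub]
  exact X_pow_dvd_iff.1 hdvd l (Nat.lt_succ_self l)

lemma bellPoly_eq_coeff_egfTrunc_pow {l N : ℕ} (h : l ≤ N) (r : ℕ) (x : ℕ → ℂ) :
    bellPoly l r x = l ! / r ! * (egfTrunc x N ^ r).coeff l := by
  rw [coeff_egfTrunc_pow_of_le h, egfTrunc, coeff_sum_C_mul_X_pow_pow, mul_sum, bellPoly]
  refine sum_congr ?_ fun a ha => ?_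
  · ext a
    simp only [mem_filter, Fintype.mem_piFinset, mem_range, mem_piAntidiag, mem_univ,
      implies_true, and_true]
    constructor
    · rintro ⟨-, hw, hs⟩
      exact ⟨hs, hw⟩
    · rintro ⟨hs, hw⟩
      exact ⟨fun j => Nat.lt_succ_of_le (hw ▸ apply_le_sum_succ_mul a j), hw, hs⟩
  · rw [cast_multinomial, (mem_piAntidiag.1 (mem_filter.1 ha).1).1]
    have : (r ! : ℂ) ≠ 0 := Nat.cast_ne_zero.2 (factorial_ne_zero r)
    field_simp

theorem bellPoly_add_general (n k : ℕ) (x y : ℕ → ℂ) :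
    bellPoly n k (fun i => x i + y i) =
      ∑ rs ∈ Finset.HasAntidiagonal.antidiagonal k, ∑ lm ∈ Finset.HasAntidiagonal.antidiagonal n,
        (n.choose lm.1 : ℂ) * bellPoly lm.1 rs.1 x * bellPoly lm.2 rs.2 y := by
  have hfact : ∀ m : ℕ, (m ! : ℂ) ≠ 0 := fun m => Nat.cast_ne_zero.2 (factorial_ne_zero m)
  calc bellPoly n k (fun i => x i + y i)
      = n ! / k ! * ((egfTrunc x n + egfTrunc y n) ^ k).coeff n := by
        rw [bellPoly_eq_coeff_egfTrunc_pow le_rfl, egfTrunc_add]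
    _ = ∑ rs ∈ antidiagonal k, ∑ lm ∈ antidiagonal n, n ! / k ! * (k.choose rs.1 *
          ((egfTrunc x n ^ rs.1).coeff lm.1 * (egfTrunc y n ^ rs.2).coeff lm.2)) := by
        rw [(Commute.all (egfTrunc x n) (egfTrunc y n)).add_pow', finsetSum_coeff]
        simp only [nsmul_eq_mul, coeff_natCast_mul]
        simp only [coeff_mul, mul_sum]
    _ = _ := by
        refine sum_congr rfl fun rs hrs => sum_congr rfl fun lm hlm => ?_
        rw [HasAntidiagonal.mem_antidiagonal] at hrs hlm
        rw [bellPoly_eq_coeff_egfTrunc_pow (N := n) (by omega),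
          bellPoly_eq_coeff_egfTrunc_pow (N := n) (by omega), ← hrs, ← hlm, Nat.cast_add_choose,
          Nat.cast_add_choose]
        field_simp [hfact]

theorem bellPoly_add (n k : ℕ) (hkn : k ≤ n) (x y : ℕ → ℂ) :
    bellPoly n k (fun i => x i + y i) =
      ∑ rs ∈ Finset.HasAntidiagonal.antidiagonal k, ∑ lm ∈ Finset.HasAntidiagonal.antidiagonal n,
        (n.choose lm.1 : ℂ) * bellPoly lm.1 rs.1 x * bellPoly lm.2 rs.2 y :=
  bellPoly_add_general n k x y
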